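/- arXiv:1202.1773 — 5 statements merged into one kernel-verified Lean document; each statement's English description precedes it below -/
import Mathlib

section
/- For the function b defined by b(ω) = sin((π/2)v(|ω|-1)) for 1 ≤ |ω| ≤ 2, b(ω) = cos((π/2)v(|ω|/2 - 1)) for 2 < |ω| ≤ 4, and b(ω) = 0 otherwise, one has b(ω)² + b(ω/2)² = 1 for all ω with 2 ≤ ω ≤ 4. -/
noncomputable def v (x : ℝ) : ℝ :=
  if x < 0 then 0
  else if x ≤ 1 then 35*x^4 - 84*x^5 + 70*x^6 - 20*x^7
  else 1

noncomputable def b (ω : ℝ) : ℝ :=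
  if 1 ≤ |ω| ∧ |ω| ≤ 2 then Real.sin (Real.pi/2 * v (|ω| - 1))
  else if 2 < |ω| ∧ |ω| ≤ 4 then Real.cos (Real.pi/2 * v (|ω|/2 - 1))
  else 0

/-! On `[2, 4]` the sine branch of `b` at `ω / 2` and the cosine branch at `ω` share the
argument `π/2 · v (ω/2 - 1)`, so the identity is `sin² + cos² = 1`. The endpoint `ω = 2` lies
in the sine branch of `b ω`; there `v 0 = 0` and `v 1 = 1` make the two branches agree. -/

open Real

lemma v_zero : v 0 = 0 := by
  norm_num [v]

lemma v_one : v 1 = 1 := by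
  norm_num [v]

lemma b_of_one_le_of_le_two {ω : ℝ} (h1 : 1 ≤ ω) (h2 : ω ≤ 2) :
    b ω = sin (π / 2 * v (ω - 1)) := by
  rw [b, abs_of_nonneg (by linarith), if_pos ⟨h1, h2⟩]

lemma b_of_two_lt_of_le_four {ω : ℝ} (h2 : 2 < ω) (h4 : ω ≤ 4) :
    b ω = cos (π / 2 * v (ω / 2 - 1)) := by
  rw [b, abs_of_nonneg (by linarith), if_neg (by intro h; linarith [h.2]), if_pos ⟨h2, h4⟩]

lemma b_of_two_le_of_le_four {ω : ℝ} (h2 : 2 ≤ ω) (h4 : ω ≤ 4) :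
    b ω = cos (π / 2 * v (ω / 2 - 1)) := by
  rcases h2.eq_or_lt with rfl | h2
  · rw [b_of_one_le_of_le_two one_le_two le_rfl]
    norm_num [v_zero, v_one]
  · exact b_of_two_lt_of_le_four h2 h4

theorem b_sq_sum_one : ∀ ω : ℝ, 2 ≤ ω → ω ≤ 4 → b ω ^ 2 + b (ω/2) ^ 2 = 1 := by
  intro ω h2 h4
  rw [b_of_two_le_of_le_four h2 h4, b_of_one_le_of_le_two (by linarith) (by linarith)]
  exact cos_sq_add_sin_sq _
end

section
/- For j ≥ -1 and ω ∈ [2^{j+1}, 2^{j+2}], b(2^{-j}ω)² + b(2^{-j-1}ω)² = 1. -/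
/-! On `[2, 4]` the two scales `t` and `t / 2` are governed by the sine and cosine of the same
angle `π/2 · v (t/2 - 1)`, so the identity is `cos² + sin² = 1`. At the junction `t = 2`, where
`b` uses its sine branch, `v 0 = 0` and `v 1 = 1` make both formulas agree. Rescaling by `2^(-j)`
moves `[2^(j+1), 2^(j+2)]` onto `[2, 4]`. -/

open Real

lemma b_eq_sin {s : ℝ} (hs₁ : 1 ≤ s) (hs₂ : s ≤ 2) : b s = sin (π / 2 * v (s - 1)) := by
  rw [b, abs_of_nonneg (by linarith), if_pos ⟨hs₁, hs₂⟩]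

lemma b_eq_cos {t : ℝ} (ht₂ : 2 ≤ t) (ht₄ : t ≤ 4) : b t = cos (π / 2 * v (t / 2 - 1)) := by
  rcases ht₂.eq_or_lt with rfl | ht₂
  · rw [b_eq_sin (by norm_num) le_rfl]
    norm_num [v_zero, v_one]
  · rw [b, abs_of_nonneg (by linarith), if_neg (by intro h; linarith [h.2]), if_pos ⟨ht₂, ht₄⟩]

lemma b_sq_add_b_half_sq {t : ℝ} (ht₂ : 2 ≤ t) (ht₄ : t ≤ 4) : b t ^ 2 + b (t / 2) ^ 2 = 1 := by
  rw [b_eq_cos ht₂ ht₄, b_eq_sin (by linarith) (by linarith)]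
  exact cos_sq_add_sin_sq _

lemma zpow_neg_mul_mem_Icc_two_four {j : ℤ} {ω : ℝ}
    (hω : ω ∈ Set.Icc ((2 : ℝ) ^ (j + 1)) ((2 : ℝ) ^ (j + 2))) :
    (2 : ℝ) ^ (-j) * ω ∈ Set.Icc 2 4 := by
  have hpos : (0 : ℝ) < 2 ^ (-j) := zpow_pos two_pos _
  have hscale (k : ℤ) : (2 : ℝ) ^ (-j) * 2 ^ (j + k) = 2 ^ k := by
    rw [← zpow_add₀ two_ne_zero]; ring_nf
  have h₁ := mul_le_mul_of_nonneg_left hω.1 hpos.le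
  have h₂ := mul_le_mul_of_nonneg_left hω.2 hpos.le
  rw [hscale 1, zpow_one] at h₁
  rw [hscale 2] at h₂
  exact ⟨h₁, h₂.trans_eq (by norm_num)⟩

lemma zpow_neg_sub_one_mul {K : Type*} [Field K] {a : K} (ha : a ≠ 0) (j : ℤ) (x : K) :
    a ^ (-j - 1) * x = a ^ (-j) * x / a := by
  rw [zpow_sub₀ ha, zpow_one]
  ring

theorem b_adjacent_scales :
    ∀ j : ℤ, -1 ≤ j → ∀ ω ∈ Set.Icc ((2:ℝ) ^ (j+1)) ((2:ℝ) ^ (j+2)),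
      b ((2:ℝ) ^ (-j) * ω) ^ 2 + b ((2:ℝ) ^ (-j-1) * ω) ^ 2 = 1 := by
  intro j _ ω hω
  obtain ⟨ht₂, ht₄⟩ := zpow_neg_mul_mem_Icc_two_four hω
  rw [zpow_neg_sub_one_mul two_ne_zero]
  exact b_sq_add_b_half_sq ht₂ ht₄
end

section
/- The function ψ̂₂ defined by ψ̂₂(ω) = sqrt(v(1+ω)) for ω ≤ 0 and sqrt(v(1-ω)) for ω > 0 satisfies ψ̂₂(ω-1)² + ψ̂₂(ω)² + ψ̂₂(ω+1)² = 1 for all |ω| ≤ 1. -/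
noncomputable def psi2 (ω : ℝ) : ℝ :=
  if ω ≤ 0 then Real.sqrt (v (1 + ω)) else Real.sqrt (v (1 - ω))

/-! The three squares are `v` evaluated at `1 - |ω - 1|`, `1 - |ω|`, `1 - |ω + 1|`. For `0 ≤ ω ≤ 1`
these points are `ω`, `1 - ω` and `-ω ≤ 0`, so the sum is `v ω + v (1 - ω)`, which is `1` for every
real argument; the case `ω ≤ 0` is the mirror image. -/

lemma v_nonneg (x : ℝ) : 0 ≤ v x := by
  unfold v
  split_ifs with hneg hle
  · exact le_rfl
  · -- `v x = x⁴ (35 - 84x + 70x² - 20x³)` and the cubic decreases from `35` to `1` on `[0, 1]`.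
    have hx : 0 ≤ x := not_lt.1 hneg
    have hx4 : 0 ≤ x ^ 4 := by positivity
    nlinarith [mul_nonneg hx4 (sq_nonneg (1 - x)), mul_nonneg (mul_nonneg hx4 hx) (sq_nonneg (1 - x)),
      mul_nonneg hx4 (mul_nonneg hx (sub_nonneg.2 hle))]
  · exact zero_le_one

lemma v_of_nonpos {x : ℝ} (hx : x ≤ 0) : v x = 0 := by
  unfold v
  split_ifs with hneg hle
  · rfl
  · obtain rfl : x = 0 := le_antisymm hx (not_lt.1 hneg)
    norm_num
  · linarith

lemma v_add_v_one_sub (x : ℝ) : v x + v (1 - x) = 1 := by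
  unfold v
  split_ifs <;> linarith

lemma psi2_sq (ω : ℝ) : psi2 ω ^ 2 = v (1 - |ω|) := by
  unfold psi2
  split_ifs with hω
  · rw [Real.sq_sqrt (v_nonneg _), abs_of_nonpos hω, sub_neg_eq_add]
  · rw [Real.sq_sqrt (v_nonneg _), abs_of_pos (not_le.1 hω)]

theorem psi2_three_shifts :
    ∀ ω : ℝ, |ω| ≤ 1 →
      psi2 (ω - 1) ^ 2 + psi2 ω ^ 2 + psi2 (ω + 1) ^ 2 = 1 := by
  intro ω hω
  obtain ⟨hlo, hhi⟩ := abs_le.1 hω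
  simp only [psi2_sq]
  rcases le_total 0 ω with hω0 | hω0
  · rw [abs_of_nonpos (by linarith : ω - 1 ≤ 0), abs_of_nonneg hω0,
      abs_of_nonneg (by linarith : 0 ≤ ω + 1), v_of_nonpos (by linarith : 1 - (ω + 1) ≤ 0),
      show 1 - -(ω - 1) = ω by ring, add_zero, v_add_v_one_sub]
  · rw [abs_of_nonpos (by linarith : ω - 1 ≤ 0), abs_of_nonpos hω0,
      abs_of_nonneg (by linarith : 0 ≤ ω + 1), v_of_nonpos (by linarith : 1 - -(ω - 1) ≤ 0),
      show 1 - (ω + 1) = -ω by ring, zero_add, add_comm,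
      v_add_v_one_sub]
end

section
/- For every j ≥ 0 and every real ω with |ω| ≤ 1, Σ_{k=-2^j}^{2^j} |ψ̂₂(k + 2^j ω)|² = 1. -/
lemma v_eq_zero_of_nonpos {x : ℝ} (h : x ≤ 0) : v x = 0 := by
  rcases h.lt_or_eq with h | rfl
  · simp [v, h]
  · norm_num [v]

lemma psi2_eq_sqrt_v (ω : ℝ) : psi2 ω = Real.sqrt (v (1 - |ω|)) := by
  unfold psi2
  split_ifs with h
  · rw [abs_of_nonpos h, sub_neg_eq_add]
  · rw [abs_of_pos (not_le.mp h)]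

lemma psi2_sq_eq_zero_of_one_le_abs {ω : ℝ} (h : 1 ≤ |ω|) : psi2 ω ^ 2 = 0 := by
  rw [psi2_sq, v_eq_zero_of_nonpos (by linarith)]

lemma psi2_sq_add_psi2_sub_one_sq {t : ℝ} (h0 : 0 ≤ t) (h1 : t ≤ 1) :
    psi2 t ^ 2 + psi2 (t - 1) ^ 2 = 1 := by
  rw [psi2_sq, psi2_sq, abs_of_nonneg h0, abs_of_nonpos (by linarith),
    show 1 - -(t - 1) = 1 - (1 - t) by ring]
  exact v_add_v_one_sub (1 - t)

lemma eq_neg_floor_sub_one_or_eq_neg_floor {k : ℤ} {x : ℝ} (h : |(k : ℝ) + x| < 1) :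
    k = -⌊x⌋ - 1 ∨ k = -⌊x⌋ := by
  obtain ⟨hlo, hhi⟩ := abs_lt.mp h
  have hfloor_le := Int.floor_le x
  have hlt_floor := Int.lt_floor_add_one x
  have hlower : ((-2 : ℤ) : ℝ) < ((k + ⌊x⌋ : ℤ) : ℝ) := by push_cast; linarith
  have hupper : ((k + ⌊x⌋ : ℤ) : ℝ) < ((1 : ℤ) : ℝ) := by push_cast; linarith
  have := Int.cast_lt.mp hlower
  have := Int.cast_lt.mp hupper
  omega

theorem sum_psi2_sq_int_add_eq_one (x : ℝ) (s : Finset ℤ)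
    (hs : ∀ k : ℤ, |(k : ℝ) + x| < 1 → k ∈ s) :
    ∑ k ∈ s, psi2 ((k : ℝ) + x) ^ 2 = 1 := by
  set f : ℤ → ℝ := fun k => psi2 ((k : ℝ) + x) ^ 2
  have hsupp : ∀ k, f k ≠ 0 → |(k : ℝ) + x| < 1 := fun k hk =>
    lt_of_not_ge fun h => hk (psi2_sq_eq_zero_of_one_le_abs h)
  have hpair : ({-⌊x⌋ - 1, -⌊x⌋} : Finset ℤ).filter (f · ≠ 0) = s.filter (f · ≠ 0) := by
    ext k
    simp only [Finset.mem_filter, Finset.mem_insert, Finset.mem_singleton]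
    exact ⟨fun ⟨_, hk⟩ => ⟨hs k (hsupp k hk), hk⟩,
      fun ⟨_, hk⟩ => ⟨eq_neg_floor_sub_one_or_eq_neg_floor (hsupp k hk), hk⟩⟩
  have hterms : f (-⌊x⌋ - 1) + f (-⌊x⌋) = 1 := by
    simp only [f, Int.cast_sub, Int.cast_neg, Int.cast_one]
    rw [show -(⌊x⌋ : ℝ) - 1 + x = Int.fract x - 1 by rw [Int.fract]; ring,
      show -(⌊x⌋ : ℝ) + x = Int.fract x by rw [Int.fract]; ring, add_comm]
    exact psi2_sq_add_psi2_sub_one_sq (Int.fract_nonneg x) (Int.fract_lt_one x).le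
  rw [← Finset.sum_filter_ne_zero, ← hpair, Finset.sum_filter_ne_zero,
    Finset.sum_pair (by omega), hterms]

lemma mem_Icc_of_abs_int_add_lt_one {N k : ℤ} {x : ℝ} (hx : |x| ≤ N)
    (hk : |(k : ℝ) + x| < 1) : k ∈ Finset.Icc (-N) N := by
  obtain ⟨hxlo, hxhi⟩ := abs_le.mp hx
  obtain ⟨hklo, hkhi⟩ := abs_lt.mp hk
  have hlower : ((-N - 1 : ℤ) : ℝ) < k := by push_cast; linarith
  have hupper : (k : ℝ) < ((N + 1 : ℤ) : ℝ) := by push_cast; linarith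
  have := Int.cast_lt.mp hlower
  have := Int.cast_lt.mp hupper
  rw [Finset.mem_Icc]
  omega

theorem psi2_shear_sum :
    ∀ j : ℕ, ∀ ω : ℝ, |ω| ≤ 1 →
      ∑ k ∈ Finset.Icc (-(2^j : ℤ)) (2^j : ℤ),
        |psi2 ((k : ℝ) + (2:ℝ)^j * ω)| ^ 2 = 1 := by
  intro j ω hω
  have hshear : |(2:ℝ)^j * ω| ≤ ((2^j : ℤ) : ℝ) := by
    rw [abs_mul, abs_of_pos (by positivity)]
    push_cast
    exact mul_le_of_le_one_right (by positivity) hω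
  simp_rw [sq_abs]
  exact sum_psi2_sq_int_add_eq_one _ _ fun k hk => mem_Icc_of_abs_int_add_lt_one hshear hk
end

section
/- The truncated sum Σ_{j=0}^{j₀-1} |ψ̂₁(2^{-2j}ω)|² equals 1 for 1 ≤ |ω| ≤ 2^{2(j₀-1)+1}, equals sin²((π/2)v(2|ω|-1)) for 1/2 < |ω| < 1, equals cos²((π/2)v(2^{-2j₀+1}|ω| - 1)) for 2^{2j₀-1} < |ω| < 2^{2j₀}, and is 0 for |ω| ≤ 1/2 or |ω| ≥ 2^{2j₀}. -/
/-!
The sum telescopes. Let `Φ x = b (2x)²` for `|x| ≤ 1` and `Φ x = 1` otherwise (`lowPass`), so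
`Φ` vanishes for `|x| ≤ 1/2`. Then `|ψ̂₁ x|² = Φ x - Φ (x/4)`: on `(1, 2]` and on `(2, 4]`
exactly two of `b (x/2)`, `b x`, `b (2x)` are nonzero, and they are the sine and cosine of one
angle. Hence the truncated sum is `Φ ω - Φ (4^{-j₀} ω)`, and each case reads off these two
values of `Φ`.
-/

open Real

noncomputable def psi1 (ω : ℝ) : ℝ := Real.sqrt (b (2*ω) ^ 2 + b ω ^ 2)

noncomputable def T (j₀ : ℕ) (ω : ℝ) : ℝ :=
  ∑ j ∈ Finset.range j₀, |psi1 ((2:ℝ) ^ (-(2 * (j:ℤ))) * ω)| ^ 2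

section b

variable {x : ℝ}

lemma b_of_abs_le_one (h : |x| ≤ 1) : b x = 0 := by
  rcases h.eq_or_lt with h | h
  · simp [b, h, v_zero]
  · rw [b, if_neg (fun h' => by linarith [h'.1]), if_neg (fun h' => by linarith [h'.1])]

lemma b_of_four_lt_abs (h : 4 < |x|) : b x = 0 := by
  rw [b, if_neg (fun h' => by linarith [h'.2]), if_neg (fun h' => by linarith [h'.2])]

lemma b_of_one_le_abs_of_abs_le_two (h₁ : 1 ≤ |x|) (h₂ : |x| ≤ 2) :
    b x = sin (π / 2 * v (|x| - 1)) :=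
  if_pos ⟨h₁, h₂⟩

lemma b_of_two_lt_abs_of_abs_le_four (h₁ : 2 < |x|) (h₂ : |x| ≤ 4) :
    b x = cos (π / 2 * v (|x| / 2 - 1)) := by
  rw [b, if_neg (fun h => by linarith [h.2]), if_pos ⟨h₁, h₂⟩]

end b

noncomputable def lowPass (x : ℝ) : ℝ := if |x| ≤ 1 then b (2 * x) ^ 2 else 1

section lowPass

variable {x : ℝ}

lemma lowPass_of_abs_le_half (h : |x| ≤ 1 / 2) : lowPass x = 0 := by
  rw [lowPass, if_pos (by linarith), b_of_abs_le_one (by rw [abs_mul, abs_two]; linarith)]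
  norm_num

lemma lowPass_of_half_le_abs_of_abs_le_one (h₁ : 1 / 2 ≤ |x|) (h₂ : |x| ≤ 1) :
    lowPass x = sin (π / 2 * v (2 * |x| - 1)) ^ 2 := by
  have h2x : |2 * x| = 2 * |x| := by rw [abs_mul, abs_two]
  rw [lowPass, if_pos h₂, b_of_one_le_abs_of_abs_le_two (by linarith) (by linarith), h2x]

lemma lowPass_of_one_le_abs (h : 1 ≤ |x|) : lowPass x = 1 := by
  rcases h.eq_or_lt with h | h
  · rw [lowPass_of_half_le_abs_of_abs_le_one (by linarith) h.ge, ← h]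
    norm_num [v_one]
  · exact if_neg h.not_ge

end lowPass

lemma sq_abs_psi1_eq_lowPass_sub (x : ℝ) : |psi1 x| ^ 2 = lowPass x - lowPass (x / 4) := by
  have h2x : |2 * x| = 2 * |x| := by rw [abs_mul, abs_two]
  have hx4 : |x / 4| = |x| / 4 := by rw [abs_div, abs_of_pos (by norm_num : (0:ℝ) < 4)]
  rw [sq_abs, psi1, sq_sqrt (by positivity)]
  rcases le_or_gt |x| 1 with h₁ | h₁
  · rw [lowPass, if_pos h₁, lowPass_of_abs_le_half (by rw [hx4]; linarith), b_of_abs_le_one h₁]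
    ring
  rcases le_or_gt |x| 2 with h₂ | h₂
  · rw [lowPass_of_one_le_abs h₁.le, lowPass_of_abs_le_half (by rw [hx4]; linarith),
      b_of_two_lt_abs_of_abs_le_four (by rw [h2x]; linarith) (by rw [h2x]; linarith),
      b_of_one_le_abs_of_abs_le_two h₁.le h₂, h2x, mul_div_cancel_left₀ _ two_ne_zero,
      cos_sq_add_sin_sq]
    ring
  rcases le_or_gt |x| 4 with h₄ | h₄
  · rw [lowPass_of_one_le_abs h₁.le,
      lowPass_of_half_le_abs_of_abs_le_one (by rw [hx4]; linarith) (by rw [hx4]; linarith),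
      b_of_four_lt_abs (by rw [h2x]; linarith), b_of_two_lt_abs_of_abs_le_four h₂ h₄, hx4,
      show 2 * (|x| / 4) - 1 = |x| / 2 - 1 by ring]
    linarith [sin_sq_add_cos_sq (π / 2 * v (|x| / 2 - 1))]
  · rw [lowPass_of_one_le_abs h₁.le, lowPass_of_one_le_abs (by rw [hx4]; linarith),
      b_of_four_lt_abs (by rw [h2x]; linarith), b_of_four_lt_abs h₄]
    ring

lemma T_eq_lowPass_sub (n : ℕ) (ω : ℝ) : T n ω = lowPass ω - lowPass (ω / 4 ^ n) := by
  have hscale (i : ℕ) : (2:ℝ) ^ (-(2 * (i:ℤ))) * ω = ω / 4 ^ i := by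
    rw [zpow_neg, zpow_mul, div_eq_inv_mul]
    norm_num
  simp only [T, hscale, sq_abs_psi1_eq_lowPass_sub, div_div, ← pow_succ]
  simpa using Finset.sum_range_sub' (fun i => lowPass (ω / 4 ^ i)) n

lemma two_pow_two_mul (n : ℕ) : (2:ℝ) ^ (2 * n) = 4 ^ n := by
  rw [pow_mul]
  norm_num

lemma two_pow_two_mul_sub_one {n : ℕ} (hn : 1 ≤ n) : (2:ℝ) ^ (2 * n - 1) = 4 ^ n / 2 := by
  rw [← two_pow_two_mul, eq_div_iff two_ne_zero, ← pow_succ, Nat.sub_add_cancel (by omega)]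

lemma two_zpow_one_sub_two_mul_mul (n : ℕ) (t : ℝ) :
    (2:ℝ) ^ ((1:ℤ) - 2 * n) * t = 2 * (t / 4 ^ n) := by
  rw [zpow_sub₀ two_ne_zero, zpow_one, ← two_pow_two_mul, ← zpow_natCast]
  push_cast
  ring

theorem truncated_psi1_sum (j₀ : ℕ) (hj₀ : 1 ≤ j₀) :
    (∀ ω : ℝ, 1 ≤ |ω| → |ω| ≤ (2:ℝ) ^ (2*(j₀-1)+1) → T j₀ ω = 1) ∧
    (∀ ω : ℝ, 1/2 < |ω| → |ω| < 1 →
      T j₀ ω = Real.sin (Real.pi/2 * v (2*|ω| - 1)) ^ 2) ∧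
    (∀ ω : ℝ, (2:ℝ) ^ (2*j₀-1) < |ω| → |ω| < (2:ℝ) ^ (2*j₀) →
      T j₀ ω = Real.cos (Real.pi/2 * v ((2:ℝ) ^ ((1:ℤ) - 2*j₀) * |ω| - 1)) ^ 2) ∧
    (∀ ω : ℝ, |ω| ≤ 1/2 ∨ (2:ℝ) ^ (2*j₀) ≤ |ω| → T j₀ ω = 0) := by
  have hpos : (0:ℝ) < 4 ^ j₀ := by positivity
  have heven := two_pow_two_mul j₀
  have hodd := two_pow_two_mul_sub_one hj₀
  have hodd_one_le : (1:ℝ) ≤ 4 ^ j₀ / 2 := hodd ▸ one_le_pow₀ one_le_two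
  have hscaled (ω : ℝ) : |ω / 4 ^ j₀| = |ω| / 4 ^ j₀ := by rw [abs_div, abs_of_pos hpos]
  simp only [T_eq_lowPass_sub]
  refine ⟨fun ω h₁ h₂ => ?_, fun ω h₁ h₂ => ?_, fun ω h₁ h₂ => ?_,
    fun ω h => ?_⟩
  · rw [show 2 * (j₀ - 1) + 1 = 2 * j₀ - 1 by omega, hodd] at h₂
    rw [lowPass_of_one_le_abs h₁,
      lowPass_of_abs_le_half (by rw [hscaled, div_le_iff₀ hpos]; linarith)]
    ring
  · rw [lowPass_of_half_le_abs_of_abs_le_one h₁.le h₂.le,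
      lowPass_of_abs_le_half (by rw [hscaled, div_le_iff₀ hpos]; linarith)]
    ring
  · rw [hodd] at h₁
    rw [heven] at h₂
    rw [lowPass_of_one_le_abs (by linarith), two_zpow_one_sub_two_mul_mul,
      lowPass_of_half_le_abs_of_abs_le_one (by rw [hscaled, le_div_iff₀ hpos]; linarith)
        (by rw [hscaled, div_le_iff₀ hpos]; linarith), hscaled]
    linarith [sin_sq_add_cos_sq (π / 2 * v (2 * (|ω| / 4 ^ j₀) - 1))]
  · rw [heven] at h
    rcases h with h | h
    · rw [lowPass_of_abs_le_half h, lowPass_of_abs_le_half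
        (by rw [hscaled, div_le_iff₀ hpos]; nlinarith [abs_nonneg ω])]
      ring
    · rw [lowPass_of_one_le_abs (by linarith),
        lowPass_of_one_le_abs (by rw [hscaled, le_div_iff₀ hpos]; linarith)]
      ring
end
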